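/- Let $0<\beta\le 1$. For every integer $k$, every integer $l\le k-2$, every locally integrable $f$, and every $x$ with $2^{k-1}<|x|\le 2^k$, the intrinsic square function satisfies the pointwise bound $S_\beta(f\chi_{D_l})(x) \le C\,|x|^{-n}\int_{D_l}|f(z)|\,dz$, where $D_l=\{2^{l-1}<|z|\le 2^l\}$ and $C$ depends only on $n$. -/

import Mathlib

open MeasureTheory Metric Set ENNReal NNReal Filter

noncomputable section

abbrev Rn (n : ℕ) := EuclideanSpace ℝ (Fin n)

/-- The dyadic annulus `D_l = {2^(l-1) < |z| ≤ 2^l}`. -/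
def annulus {n : ℕ} (l : ℤ) : Set (Rn n) :=
  {z | (2 : ℝ) ^ (l - 1) < ‖z‖ ∧ ‖z‖ ≤ (2 : ℝ) ^ l}

/-- The family `𝒞_β`: functions supported in the unit ball, with zero mean,
satisfying the `β`-Hölder condition with constant `1`. -/
def Cbeta (n : ℕ) (β : ℝ) : Set (Rn n → ℝ) :=
  {φ | (∀ x, φ x ≠ 0 → ‖x‖ ≤ 1) ∧ (∫ x, φ x) = 0 ∧
       ∀ x x', |φ x - φ x'| ≤ ‖x - x'‖ ^ β}

/-- The convolution `f * φ_t (y)` where `φ_t(y) = t⁻ⁿ φ(y/t)`. -/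
def convDil {n : ℕ} (f φ : Rn n → ℝ) (t : ℝ) (y : Rn n) : ℝ :=
  ∫ z, f z * (t ^ (-(n : ℝ)) * φ (t⁻¹ • (y - z)))

/-- The maximal function `A_β f(y,t) = sup_{φ ∈ 𝒞_β} |f * φ_t(y)|`. -/
def Abeta {n : ℕ} (β : ℝ) (f : Rn n → ℝ) (y : Rn n) (t : ℝ) : ℝ≥0∞ :=
  ⨆ (φ : Rn n → ℝ) (_ : φ ∈ Cbeta n β), ENNReal.ofReal |convDil f φ t y|

/-- The intrinsic square function `S_β`. -/
def Sbeta {n : ℕ} (β : ℝ) (f : Rn n → ℝ) (x : Rn n) : ℝ≥0∞ :=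
  (∫⁻ p : Rn n × ℝ in {p | 0 < p.2 ∧ dist x p.1 < p.2},
      (Abeta β f p.1 p.2) ^ 2 / ENNReal.ofReal (p.2 ^ ((n : ℝ) + 1))) ^ ((1 : ℝ) / 2)

/-!
The annulus `D_l` lies in the ball of radius `|x|/2`, so for `(y, t)` in the cone over `x` the
kernel `φ_t(y - ·)`, supported in `B(y, t)`, does not meet `D_l` unless `t ≥ |x|/4`. For all `t`,
every `φ ∈ 𝒞_β` is bounded by `3^β` (compare `φ u` with the value `0` at a point at distance `3`),
whence `A_β(fχ_{D_l})(y, t) ≤ 3^β t^{-n} ∫_{D_l} |f|`. The slice of the cone at height `t` is a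
ball of volume `|B(0,1)| tⁿ`, so the square of `S_β(fχ_{D_l})(x)` is at most
`9^β (∫_{D_l} |f|)² |B(0,1)| ∫_{|x|/4}^∞ t^{-2n-1} dt`, which is of order `|x|^{-2n}`.
-/

theorem abs_le_three_rpow_of_holder {E : Type*} [NormedAddCommGroup E] [NormedSpace ℝ E]
    [Nontrivial E] {φ : E → ℝ} {β : ℝ} (hsupp : ∀ x, φ x ≠ 0 → ‖x‖ ≤ 1)
    (hφ : ∀ x x', |φ x - φ x'| ≤ ‖x - x'‖ ^ β) (u : E) : |φ u| ≤ 3 ^ β := by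
  by_cases hu : φ u = 0
  · simpa [hu] using Real.rpow_nonneg (by norm_num : (0 : ℝ) ≤ 3) β
  obtain ⟨e, he⟩ := exists_norm_eq E (by norm_num : (0 : ℝ) ≤ 3)
  have hfar : φ (u + e) = 0 := by
    by_contra h
    linarith [hsupp _ h, hsupp _ hu, norm_le_add_norm_add' u e]
  simpa [hfar, he] using hφ u (u + e)

theorem abs_convDil_le {n : ℕ} {f φ : Rn n → ℝ} {M t : ℝ} (hf : Integrable f)
    (hφ : ∀ u, |φ u| ≤ M) (ht : 0 ≤ t) (y : Rn n) :
    |convDil f φ t y| ≤ M * (∫ z, ‖f z‖) * t ^ (-(n : ℝ)) := by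
  have htn : 0 ≤ t ^ (-(n : ℝ)) := Real.rpow_nonneg ht _
  have hbound : ∀ z, ‖f z * (t ^ (-(n : ℝ)) * φ (t⁻¹ • (y - z)))‖
      ≤ ‖f z‖ * (M * t ^ (-(n : ℝ))) := by
    intro z
    rw [norm_mul, norm_mul, Real.norm_of_nonneg htn, Real.norm_eq_abs, mul_comm M]
    gcongr
    exact hφ _
  calc |convDil f φ t y| ≤ ∫ z, ‖f z‖ * (M * t ^ (-(n : ℝ))) :=
        norm_integral_le_of_norm_le (hf.norm.mul_const _) (Eventually.of_forall hbound)
    _ = M * (∫ z, ‖f z‖) * t ^ (-(n : ℝ)) := by rw [integral_mul_const]; ring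

theorem convDil_eq_zero_of_lt_norm_sub {n : ℕ} {f φ : Rn n → ℝ} {t : ℝ} {y : Rn n}
    (hφ : ∀ x, φ x ≠ 0 → ‖x‖ ≤ 1) (ht : 0 < t) (hfar : ∀ z, f z ≠ 0 → t < ‖y - z‖) :
    convDil f φ t y = 0 := by
  suffices h : ∀ z, f z * (t ^ (-(n : ℝ)) * φ (t⁻¹ • (y - z))) = 0 by
    simp only [convDil, h, integral_zero]
  intro z
  by_cases hz : f z = 0
  · rw [hz, zero_mul]
  by_cases hφz : φ (t⁻¹ • (y - z)) = 0
  · rw [hφz, mul_zero, mul_zero]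
  have := hφ _ hφz
  rw [norm_smul, norm_inv, Real.norm_of_nonneg ht.le, inv_mul_le_iff₀ ht, mul_one] at this
  exact absurd (hfar z hz) this.not_gt

theorem Abeta_le_of_integrable {n : ℕ} (hn : 0 < n) (β : ℝ) {g : Rn n → ℝ}
    (hg : Integrable g) (y : Rn n) {t : ℝ} (ht : 0 ≤ t) :
    Abeta β g y t ≤ ENNReal.ofReal (3 ^ β * (∫ z, ‖g z‖) * t ^ (-(n : ℝ))) := by
  have : NeZero n := ⟨hn.ne'⟩
  refine iSup₂_le fun φ hφ => ENNReal.ofReal_le_ofReal ?_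
  exact abs_convDil_le hg (abs_le_three_rpow_of_holder hφ.1 hφ.2.2) ht y

theorem Abeta_eq_zero_of_lt_norm_sub {n : ℕ} (β : ℝ) {g : Rn n → ℝ} {y : Rn n} {t : ℝ}
    (ht : 0 < t) (hfar : ∀ z, g z ≠ 0 → t < ‖y - z‖) : Abeta β g y t = 0 := by
  refine le_antisymm (iSup₂_le fun φ hφ => ?_) bot_le
  rw [convDil_eq_zero_of_lt_norm_sub hφ.1 ht hfar, abs_zero, ENNReal.ofReal_zero]

theorem lintegral_Ici_rpow {R s : ℝ} (hR : 0 < R) (hs : s < -1) :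
    ∫⁻ t in Ici R, ENNReal.ofReal (t ^ s) = ENNReal.ofReal (-R ^ (s + 1) / (s + 1)) := by
  rw [← Measure.restrict_congr_set Ioi_ae_eq_Ici, ← integral_Ioi_rpow_of_lt hs hR,
    ofReal_integral_eq_lintegral_ofReal (integrableOn_Ioi_rpow_of_lt hs hR)]
  filter_upwards [ae_restrict_mem measurableSet_Ioi] with t ht
  exact Real.rpow_nonneg (hR.trans ht).le _

def truncCone {E : Type*} [PseudoMetricSpace E] (x : E) (R : ℝ) : Set (E × ℝ) :=
  {p | R ≤ p.2 ∧ dist x p.1 < p.2}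

theorem measurableSet_truncCone {E : Type*} [PseudoMetricSpace E] [MeasurableSpace E]
    [OpensMeasurableSpace E] (x : E) (R : ℝ) : MeasurableSet (truncCone x R) :=
  (measurableSet_le measurable_const measurable_snd).inter
    (measurableSet_lt ((continuous_const.dist continuous_id).measurable.comp measurable_fst)
      measurable_snd)

theorem lintegral_truncCone_rpow {E : Type*} [NormedAddCommGroup E] [NormedSpace ℝ E]
    [MeasurableSpace E] [BorelSpace E] [FiniteDimensional ℝ E] [Nontrivial E]
    (μ : Measure E) [μ.IsAddHaarMeasure] (x : E) {R s : ℝ} (hR : 0 < R)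
    (hs : s + Module.finrank ℝ E < -1) :
    ∫⁻ p in truncCone x R, ENNReal.ofReal (p.2 ^ s) ∂μ.prod volume
      = μ (ball 0 1) * ENNReal.ofReal
          (-R ^ (s + Module.finrank ℝ E + 1) / (s + Module.finrank ℝ E + 1)) := by
  set T := truncCone x R
  have hslice : ∀ t, ∫⁻ y, T.indicator (fun p => ENNReal.ofReal (p.2 ^ s)) (y, t) ∂μ
      = (Ici R).indicator
          (fun t => μ (ball 0 1) * ENNReal.ofReal (t ^ (s + Module.finrank ℝ E))) t := by
    intro t
    by_cases hRt : R ≤ t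
    · have ht : 0 ≤ t := hR.le.trans hRt
      have hy : ∀ y, T.indicator (fun p => ENNReal.ofReal (p.2 ^ s)) (y, t)
          = (ball x t).indicator (fun _ => ENNReal.ofReal (t ^ s)) y := fun y => by
        simp only [T, truncCone, indicator, mem_ofPred_eq, mem_ball', hRt, true_and]
      rw [lintegral_congr hy, lintegral_indicator_const measurableSet_ball,
        Measure.addHaar_ball μ x ht, indicator_of_mem (mem_Ici.2 hRt), ← mul_assoc, mul_comm,
        ← ENNReal.ofReal_mul (Real.rpow_nonneg ht _), ← Real.rpow_natCast,
        ← Real.rpow_add' ht (by linarith)]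
    · have hy : ∀ y, T.indicator (fun p => ENNReal.ofReal (p.2 ^ s)) (y, t) = 0 :=
        fun y => indicator_of_notMem (fun h => hRt h.1) _
      rw [lintegral_congr hy, lintegral_zero, indicator_of_notMem (notMem_Ici.2 (not_le.1 hRt))]
  have hmeas : Measurable fun t : ℝ => ENNReal.ofReal (t ^ (s + Module.finrank ℝ E)) := by
    fun_prop
  have hT : MeasurableSet T := measurableSet_truncCone x R
  have hF : Measurable (T.indicator fun p : E × ℝ => ENNReal.ofReal (p.2 ^ s)) :=
    (by fun_prop : Measurable fun p : E × ℝ => ENNReal.ofReal (p.2 ^ s)).indicator hT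
  rw [← lintegral_indicator hT, lintegral_prod_symm' _ hF, lintegral_congr hslice,
    lintegral_indicator measurableSet_Ici, lintegral_const_mul _ hmeas, lintegral_Ici_rpow hR hs]

theorem sq_mul_rpow_neg_div_rpow {t : ℝ} (ht : 0 < t) (B a : ℝ) :
    (B * t ^ (-a)) ^ 2 / t ^ (a + 1) = B ^ 2 * t ^ (-(3 * a + 1)) := by
  rw [mul_pow, ← Real.rpow_natCast (t ^ _) 2, ← Real.rpow_mul ht.le, mul_div_assoc,
    ← Real.rpow_sub ht]
  congr 2
  push_cast
  ring

theorem Abeta_sq_div_le {n : ℕ} {β : ℝ} {g : Rn n → ℝ} {x y : Rn n} {B R t : ℝ}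
    (hB : 0 ≤ B) (ht : 0 < t) (hxy : dist x y < t)
    (hA : Abeta β g y t ≤ ENNReal.ofReal (B * t ^ (-(n : ℝ))))
    (hA0 : t < R → Abeta β g y t = 0) :
    Abeta β g y t ^ 2 / ENNReal.ofReal (t ^ ((n : ℝ) + 1))
      ≤ (truncCone x R).indicator
          (fun p => ENNReal.ofReal (B ^ 2) * ENNReal.ofReal (p.2 ^ (-(3 * n + 1 : ℝ)))) (y, t) := by
  by_cases hRt : R ≤ t
  · rw [indicator_of_mem (show (y, t) ∈ truncCone x R from ⟨hRt, hxy⟩)]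
    calc Abeta β g y t ^ 2 / ENNReal.ofReal (t ^ ((n : ℝ) + 1))
        ≤ ENNReal.ofReal (B * t ^ (-(n : ℝ))) ^ 2 / ENNReal.ofReal (t ^ ((n : ℝ) + 1)) := by
          gcongr
      _ = _ := by
          rw [← ENNReal.ofReal_pow (by positivity),
            ← ENNReal.ofReal_div_of_pos (Real.rpow_pos_of_pos ht _),
            sq_mul_rpow_neg_div_rpow ht, ENNReal.ofReal_mul (sq_nonneg B)]
  · simp [hA0 (not_le.1 hRt)]

theorem lintegral_Abeta_sq_div_le {n : ℕ} (hn : 0 < n) {β : ℝ} {g : Rn n → ℝ} {x : Rn n}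
    {B R : ℝ} (hB : 0 ≤ B) (hR : 0 < R)
    (hA : ∀ y t, 0 < t → Abeta β g y t ≤ ENNReal.ofReal (B * t ^ (-(n : ℝ))))
    (hA0 : ∀ y t, t < R → dist x y < t → Abeta β g y t = 0) :
    ∫⁻ p in {p : Rn n × ℝ | 0 < p.2 ∧ dist x p.1 < p.2},
        Abeta β g p.1 p.2 ^ 2 / ENNReal.ofReal (p.2 ^ ((n : ℝ) + 1))
      ≤ ENNReal.ofReal
          (B ^ 2 * ((volume (ball (0 : Rn n) 1)).toReal * (R ^ (-(2 * n : ℝ)) / (2 * n)))) := by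
  have : NeZero n := ⟨hn.ne'⟩
  have hn' : (1 : ℝ) ≤ n := Nat.one_le_cast.2 hn
  set ω := (volume (ball (0 : Rn n) 1)).toReal
  set F := fun p : Rn n × ℝ => ENNReal.ofReal (B ^ 2) * ENNReal.ofReal (p.2 ^ (-(3 * n + 1 : ℝ)))
  calc _ ≤ ∫⁻ p in {p : Rn n × ℝ | 0 < p.2 ∧ dist x p.1 < p.2}, (truncCone x R).indicator F p :=
        setLIntegral_mono ((by fun_prop : Measurable F).indicator (measurableSet_truncCone x R))
          fun p hp => Abeta_sq_div_le hB hp.1 hp.2 (hA p.1 p.2 hp.1) (hA0 p.1 p.2 · hp.2)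
    _ ≤ ∫⁻ p in truncCone x R, F p := by
        rw [← lintegral_indicator (measurableSet_truncCone x R)]
        exact setLIntegral_le_lintegral _ _
    _ = _ := by
        rw [lintegral_const_mul _ (by fun_prop), Measure.volume_eq_prod,
          lintegral_truncCone_rpow volume x hR (by rw [finrank_euclideanSpace_fin]; linarith),
          finrank_euclideanSpace_fin, ← ENNReal.ofReal_toReal measure_ball_lt_top.ne,
          ← ENNReal.ofReal_mul ENNReal.toReal_nonneg, ← ENNReal.ofReal_mul (sq_nonneg B)]
        congr 3
        rw [show -(3 * n + 1 : ℝ) + n + 1 = -(2 * n) by ring, neg_div_neg_eq]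

theorem Sbeta_le_of_Abeta_le {n : ℕ} (hn : 0 < n) {β : ℝ} {g : Rn n → ℝ} {x : Rn n}
    {B R : ℝ} (hB : 0 ≤ B) (hR : 0 < R)
    (hA : ∀ y t, 0 < t → Abeta β g y t ≤ ENNReal.ofReal (B * t ^ (-(n : ℝ))))
    (hA0 : ∀ y t, t < R → dist x y < t → Abeta β g y t = 0) :
    Sbeta β g x ≤ ENNReal.ofReal
      (B * √((volume (ball (0 : Rn n) 1)).toReal / (2 * n)) * R ^ (-(n : ℝ))) := by
  set ω := (volume (ball (0 : Rn n) 1)).toReal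
  have hsq : B ^ 2 * (ω * (R ^ (-(2 * n : ℝ)) / (2 * n)))
      = (B * √(ω / (2 * n)) * R ^ (-(n : ℝ))) ^ 2 := by
    rw [mul_pow, mul_pow, Real.sq_sqrt (by positivity), ← Real.rpow_natCast (R ^ _) 2,
      ← Real.rpow_mul hR.le]
    push_cast
    ring_nf
  calc Sbeta β g x
      ≤ ENNReal.ofReal (B ^ 2 * (ω * (R ^ (-(2 * n : ℝ)) / (2 * n)))) ^ (1 / 2 : ℝ) :=
        ENNReal.rpow_le_rpow (lintegral_Abeta_sq_div_le hn hB hR hA hA0) (by norm_num)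
    _ = _ := by
        rw [ENNReal.ofReal_rpow_of_nonneg (by positivity) (by norm_num), ← Real.sqrt_eq_rpow, hsq,
          Real.sqrt_sq (by positivity)]

theorem measurableSet_annulus {n : ℕ} (l : ℤ) : MeasurableSet (annulus (n := n) l) :=
  (measurableSet_lt measurable_const measurable_norm).inter
    (measurableSet_le measurable_norm measurable_const)

theorem annulus_subset_closedBall {n : ℕ} (l : ℤ) :
    annulus (n := n) l ⊆ closedBall 0 ((2 : ℝ) ^ l) := fun _ hz =>
  mem_closedBall_zero_iff.2 hz.2

theorem norm_le_half_of_mem_annulus {n : ℕ} {k l : ℤ} (hl : l ≤ k - 2) {x z : Rn n}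
    (hx : (2 : ℝ) ^ (k - 1) < ‖x‖) (hz : z ∈ annulus l) : ‖z‖ ≤ ‖x‖ / 2 :=
  calc ‖z‖ ≤ 2 ^ l := hz.2
    _ ≤ 2 ^ (k - 1 - 1) := zpow_le_zpow_right₀ one_le_two (by omega)
    _ ≤ ‖x‖ / 2 := by rw [zpow_sub_one₀ two_ne_zero]; linarith

theorem lt_norm_sub_of_dist_lt {E : Type*} [SeminormedAddCommGroup E] {x y z : E} {t : ℝ}
    (hz : ‖z‖ ≤ ‖x‖ / 2) (ht : t < ‖x‖ / 4) (hxy : dist x y < t) : t < ‖y - z‖ := by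
  rw [dist_eq_norm] at hxy
  linarith [norm_sub_le_norm_sub_add_norm_sub x y z, norm_sub_norm_le x z]

theorem intrinsic_square_pointwise_bound_inner_general
    (n : ℕ) (hn : 0 < n) (β : ℝ) :
    ∃ C : ℝ, 0 < C ∧
      ∀ (k l : ℤ), l ≤ k - 2 →
      ∀ f : Rn n → ℝ, LocallyIntegrable f volume →
      ∀ x : Rn n, (2 : ℝ) ^ (k - 1) < ‖x‖ → ‖x‖ ≤ (2 : ℝ) ^ k →
        Sbeta β ((annulus l).indicator f) x
          ≤ ENNReal.ofReal C * ENNReal.ofReal (‖x‖ ^ (-(n : ℝ))) *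
              ∫⁻ z in annulus (n := n) l, (‖f z‖₊ : ℝ≥0∞) := by
  have hω : 0 < (volume (ball (0 : Rn n) 1)).toReal :=
    ENNReal.toReal_pos (measure_ball_pos _ _ one_pos).ne' measure_ball_lt_top.ne
  refine ⟨3 ^ β * √((volume (ball (0 : Rn n) 1)).toReal / (2 * n)) * 4 ^ (n : ℝ),
    by positivity, fun k l hl f hf x hx _ => ?_⟩
  have hx0 : 0 < ‖x‖ := (_root_.zpow_pos two_pos _).trans hx
  have hIntOn : IntegrableOn f (annulus l) :=
    (hf.integrableOn_isCompact (isCompact_closedBall _ _)).mono_set (annulus_subset_closedBall l)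
  have hS := Sbeta_le_of_Abeta_le hn (by positivity) (by positivity : 0 < ‖x‖ / 4)
    (fun y t ht => Abeta_le_of_integrable hn β
      (hIntOn.integrable_indicator (measurableSet_annulus l)) y ht.le)
    (fun y t ht hxy => Abeta_eq_zero_of_lt_norm_sub β (dist_nonneg.trans_lt hxy)
      fun z hz => lt_norm_sub_of_dist_lt
        (norm_le_half_of_mem_annulus hl hx (support_indicator_subset hz)) ht hxy)
  have hnorm : ∫ z, ‖(annulus l).indicator f z‖ = ∫ z in annulus l, ‖f z‖ := by
    simp_rw [norm_indicator_eq_indicator_norm, integral_indicator (measurableSet_annulus l)]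
  have hlin : ENNReal.ofReal (∫ z in annulus l, ‖f z‖)
      = ∫⁻ z in annulus (n := n) l, (‖f z‖₊ : ℝ≥0∞) :=
    ofReal_integral_norm_eq_lintegral_enorm hIntOn
  have h4 : (‖x‖ / 4) ^ (-(n : ℝ)) = 4 ^ (n : ℝ) * ‖x‖ ^ (-(n : ℝ)) := by
    rw [Real.div_rpow hx0.le zero_le_four, Real.rpow_neg zero_le_four, div_inv_eq_mul, mul_comm]
  rw [← hlin, ← ENNReal.ofReal_mul (by positivity), ← ENNReal.ofReal_mul (by positivity)]
  refine hS.trans_eq (congrArg ENNReal.ofReal ?_)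
  rw [hnorm, h4]
  ring

theorem intrinsic_square_pointwise_bound_inner
    (n : ℕ) (hn : 0 < n) (β : ℝ) (hβ0 : 0 < β) (hβ1 : β ≤ 1) :
    ∃ C : ℝ, 0 < C ∧
      ∀ (k l : ℤ), l ≤ k - 2 →
      ∀ f : Rn n → ℝ, LocallyIntegrable f volume →
      ∀ x : Rn n, (2 : ℝ) ^ (k - 1) < ‖x‖ → ‖x‖ ≤ (2 : ℝ) ^ k →
        Sbeta β ((annulus l).indicator f) x
          ≤ ENNReal.ofReal C * ENNReal.ofReal (‖x‖ ^ (-(n : ℝ))) *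
              ∫⁻ z in annulus (n := n) l, (‖f z‖₊ : ℝ≥0∞) :=
  intrinsic_square_pointwise_bound_inner_general n hn β

end
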